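/- Let A, B, C, D ∈ ℝ² be four points in convex position (in cyclic order) determining at most three distinct angle values in (0,π), with interior angles in cyclic order γ, γ, β, β where γ > β and γ ≠ π/2. Then β = 2π/5, γ = 3π/5, and the segments DA, AB, BC all have equal length; i.e., ABCD consists of four vertices of a regular pentagon. -/

import Mathlib

open EuclideanGeometry

noncomputable section

abbrev Pt : Type := EuclideanSpace ℝ (Fin 2)

/-- The point (x, y) in the Euclidean plane. -/
def pt (x y : ℝ) : Pt := (WithLp.equiv 2 (Fin 2 → ℝ)).symm ![x, y]

/-- The set of distinct angle values in (0, π) determined by a planar point set. -/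
def angleSet (P : Set Pt) : Set ℝ :=
  {θ : ℝ | θ ∈ Set.Ioo 0 Real.pi ∧
    ∃ x ∈ P, ∃ y ∈ P, ∃ z ∈ P, x ≠ y ∧ y ≠ z ∧ x ≠ z ∧ ∠ x y z = θ}


/-- A convex quadrilateral with vertices in cyclic order: the open diagonals meet and
no three consecutive vertices are collinear. -/
def ConvexQuad (A B C D : Pt) : Prop :=
  (∃ x, x ∈ openSegment ℝ A C ∧ x ∈ openSegment ℝ B D) ∧
  ¬ Collinear ℝ ({A, B, C} : Set Pt) ∧ ¬ Collinear ℝ ({B, C, D} : Set Pt) ∧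
  ¬ Collinear ℝ ({C, D, A} : Set Pt) ∧ ¬ Collinear ℝ ({D, A, B} : Set Pt)

/-! The diagonals split the angles at `A` and `C`, so `γ + β = π`. The angles `∠ABD`, `∠BDA`,
`∠BAC` lie in triangles with an angle `γ`, hence are smaller than `β`; as there are only three
angle values, they all equal one value `α`, and the triangle `ABD` gives `β = 2α`. The rest
`∠DAC = γ - α` of the angle at `A` is then neither `α` nor `γ`, so it is `β`: `γ = 3α` and
`5α = π`. Equal base angles make the triangles `ABD` and `ABC` isosceles. -/

lemma sbtw_of_mem_openSegment {E : Type*} [AddCommGroup E] [Module ℝ E] {x y z : E}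
    (h : y ∈ openSegment ℝ x z) (hxz : x ≠ z) : Sbtw ℝ x y z :=
  ⟨mem_segment_iff_wbtw.1 (openSegment_subset_segment ℝ x z h),
    fun hyx => hxz (left_mem_openSegment_iff.1 (hyx ▸ h)),
    fun hyz => hxz (right_mem_openSegment_iff.1 (hyz ▸ h))⟩

section Quadrilateral

variable {V P : Type*} [NormedAddCommGroup V] [InnerProductSpace ℝ V] [MetricSpace P]
  [NormedAddTorsor V P] {A B C D X : P}

lemma angle_add_angle_eq_of_sbtw_of_sbtw (hAC : Sbtw ℝ A X C) (hBD : Sbtw ℝ B X D) :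
    ∠ D A C + ∠ C A B = ∠ D A B :=
  angle_add_angle_eq_of_sbtw_of_sameRay hBD.symm hAC.wbtw.sameRay_vsub_left
    hAC.left_ne_right.symm

lemma angle_add_angle_add_angle_add_angle_eq_two_pi_of_sbtw_of_sbtw (hAC : Sbtw ℝ A X C)
    (hBD : Sbtw ℝ B X D) : ∠ D A B + ∠ A B C + ∠ B C D + ∠ C D A = 2 * Real.pi := by
  have hA := angle_add_angle_eq_of_sbtw_of_sbtw hAC hBD
  have hC := angle_add_angle_eq_of_sbtw_of_sbtw hAC.symm hBD.symm
  have hABC := angle_add_angle_add_angle_eq_pi B hAC.left_ne_right (p₁ := C)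
  have hACD := angle_add_angle_add_angle_eq_pi D hAC.left_ne_right.symm (p₁ := A)
  linarith

end Quadrilateral

namespace ConvexQuad

variable {A B C D : Pt}

lemma exists_sbtw (h : ConvexQuad A B C D) : ∃ X, Sbtw ℝ A X C ∧ Sbtw ℝ B X D := by
  obtain ⟨⟨X, hAC, hBD⟩, hABC, hBCD, -, -⟩ := h
  exact ⟨X, sbtw_of_mem_openSegment hAC (ne₁₃_of_not_collinear hABC),
    sbtw_of_mem_openSegment hBD (ne₁₃_of_not_collinear hBCD)⟩

lemma angle_add_angle (h : ConvexQuad A B C D) : ∠ D A C + ∠ C A B = ∠ D A B :=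
  have ⟨_, hAC, hBD⟩ := h.exists_sbtw
  angle_add_angle_eq_of_sbtw_of_sbtw hAC hBD

lemma angle_sum (h : ConvexQuad A B C D) :
    ∠ D A B + ∠ A B C + ∠ B C D + ∠ C D A = 2 * Real.pi :=
  have ⟨_, hAC, hBD⟩ := h.exists_sbtw
  angle_add_angle_add_angle_add_angle_eq_two_pi_of_sbtw_of_sbtw hAC hBD

end ConvexQuad

lemma Set.eq_or_eq_or_eq_of_ncard_le_three {α : Type*} {S : Set α} (hS : S.Finite)
    (h3 : S.ncard ≤ 3) {a b c x : α} (ha : a ∈ S) (hb : b ∈ S) (hc : c ∈ S) (hab : a ≠ b)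
    (hac : a ≠ c) (hbc : b ≠ c) (hx : x ∈ S) : x = a ∨ x = b ∨ x = c := by
  have habc : ({a, b, c} : Set α) = S :=
    Set.eq_of_subset_of_ncard_le (by simp [Set.insert_subset_iff, ha, hb, hc])
      (by rwa [Set.ncard_eq_three.2 ⟨a, b, c, hab, hac, hbc, rfl⟩]) hS
  simpa [← habc] using hx

lemma angleSet_finite {P : Set Pt} (hP : P.Finite) : (angleSet P).Finite := by
  refine ((hP.prod (hP.prod hP)).image fun t => ∠ t.1 t.2.1 t.2.2).subset ?_
  rintro θ ⟨-, x, hx, y, hy, z, hz, -, -, -, rfl⟩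
  exact ⟨(x, y, z), ⟨hx, hy, hz⟩, rfl⟩

lemma angle_mem_angleSet {P : Set Pt} {x y z : Pt} (hx : x ∈ P) (hy : y ∈ P) (hz : z ∈ P)
    (h : ¬Collinear ℝ ({x, y, z} : Set Pt)) : ∠ x y z ∈ angleSet P :=
  ⟨⟨angle_pos_of_not_collinear h, angle_lt_pi_of_not_collinear h⟩, x, hx, y, hy, z, hz,
    ne₁₂_of_not_collinear h, ne₂₃_of_not_collinear h, ne₁₃_of_not_collinear h, rfl⟩

theorem stmt6_general (A B C D : Pt) (γ β : ℝ) (hq : ConvexQuad A B C D)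
    (hA : ∠ D A B = γ) (hB : ∠ A B C = γ) (hC : ∠ B C D = β) (hD : ∠ C D A = β)
    (hgb : β < γ)
    (hcount : (angleSet {A, B, C, D}).ncard ≤ 3) :
    β = 2 * Real.pi / 5 ∧ γ = 3 * Real.pi / 5 ∧
    dist D A = dist A B ∧ dist A B = dist B C := by
  have hsum : γ + β = Real.pi := by linarith [hq.angle_sum]
  have hsplit : ∠ D A C + ∠ B A C = γ := by rw [angle_comm B, ← hA, hq.angle_add_angle]
  obtain ⟨-, hABC, hBCD, hCDA, hDAB⟩ := hq
  have nABD : ¬Collinear ℝ ({A, B, D} : Set Pt) := by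
    rwa [Set.insert_comm, Set.pair_comm] at hDAB
  have nBDA : ¬Collinear ℝ ({B, D, A} : Set Pt) := by
    rwa [Set.pair_comm, Set.insert_comm] at hDAB
  have nBCA : ¬Collinear ℝ ({B, C, A} : Set Pt) := by
    rwa [Set.insert_comm, Set.pair_comm] at hABC
  have nBAC : ¬Collinear ℝ ({B, A, C} : Set Pt) := by
    rwa [Set.insert_comm] at hABC
  have nDAC : ¬Collinear ℝ ({D, A, C} : Set Pt) := by
    rwa [Set.insert_comm, Set.pair_comm] at hCDA
  have hABD : ∠ A B D + ∠ B D A + ∠ D A B = Real.pi :=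
    angle_add_angle_add_angle_eq_pi D (ne₁₂_of_not_collinear hABC).symm
  have hBCA : ∠ B C A + ∠ C A B + ∠ A B C = Real.pi :=
    angle_add_angle_add_angle_eq_pi A (ne₂₃_of_not_collinear hABC).symm
  have hα : ∠ A B D < β := by linarith [angle_pos_of_not_collinear nBDA]
  have hvalue : ∀ θ ∈ angleSet {A, B, C, D}, θ = ∠ A B D ∨ θ = β ∨ θ = γ := fun _ =>
    Set.eq_or_eq_or_eq_of_ncard_le_three (angleSet_finite (Set.toFinite _)) hcount
      (angle_mem_angleSet (by simp) (by simp) (by simp) nABD)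
      (hC ▸ angle_mem_angleSet (by simp) (by simp) (by simp) hBCD)
      (hA ▸ angle_mem_angleSet (by simp) (by simp) (by simp) hDAB) hα.ne (by linarith) hgb.ne
  have hBAC : ∠ B A C = ∠ A B D := by
    rcases hvalue _ (angle_mem_angleSet (by simp) (by simp) (by simp) nBAC) with h | h | h <;>
      linarith [angle_comm C A B, angle_pos_of_not_collinear nBCA]
  have hBDA : ∠ B D A = ∠ A B D := by
    rcases hvalue _ (angle_mem_angleSet (by simp) (by simp) (by simp) nBDA) with h | h | h <;>
      linarith [angle_pos_of_not_collinear nABD]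
  -- ∠ D A C = ∠ A B D would give γ = 2 ∠ A B D = β.
  have hDAC : ∠ D A C = β := by
    rcases hvalue _ (angle_mem_angleSet (by simp) (by simp) (by simp) nDAC) with h | h | h <;>
      linarith [angle_pos_of_not_collinear nBAC]
  refine ⟨by linarith, by linarith, ?_, ?_⟩
  · rw [dist_comm D A]
    exact dist_eq_of_angle_eq_angle_of_angle_ne_pi (by linarith [angle_comm A D B])
      (by linarith)
  · rw [dist_comm A B]
    exact dist_eq_of_angle_eq_angle_of_angle_ne_pi (by linarith [angle_comm C A B])
      (by linarith)

theorem stmt6 (A B C D : Pt) (γ β : ℝ) (hq : ConvexQuad A B C D)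
    (hA : ∠ D A B = γ) (hB : ∠ A B C = γ) (hC : ∠ B C D = β) (hD : ∠ C D A = β)
    (hgb : β < γ) (hg : γ ≠ Real.pi / 2)
    (hcount : (angleSet {A, B, C, D}).ncard ≤ 3) :
    β = 2 * Real.pi / 5 ∧ γ = 3 * Real.pi / 5 ∧
    dist D A = dist A B ∧ dist A B = dist B C :=
  stmt6_general A B C D γ β hq hA hB hC hD hgb hcount
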